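/- arXiv:math/0610647 — 2 statements merged into one kernel-verified Lean document; each statement's English description precedes it below -/
import Mathlib

section
/- Let σ² > 0 and θ ∈ ℝ \ {0}, and define h(x) = (1 + x/θ)^{-θ} for 1 + x/θ > 0. Then the function x ↦ 1/(1 + σ²·h(x)/2), extended appropriately by 0 and 1 at the endpoints of the support, is a cumulative distribution function. In particular, for h(x) = e^{-x} (the θ → ∞ case), x ↦ 1/(1+σ²e^{-x}/2) is a logistic-type c.d.f. on ℝ: strictly increasing, continuous, with limits 0 at -∞ and 1 at +∞. -/
open Filter Topology Real

/-- For σ² > 0 and θ ≠ 0, with h(x) = (1+x/θ)^{-θ}, the function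
G(x) = 1/(1+σ²h(x)/2) is monotone nondecreasing on its support {x | 1+x/θ > 0}.
In the θ → ∞ case, h(x) = e^{-x}, and F(x) = 1/(1+σ²e^{-x}/2) is a logistic-type
c.d.f. on ℝ: strictly increasing, continuous, with limits 0 at -∞ and 1 at +∞. -/
theorem stmt_8 (σ2 θ : ℝ) (hσ : 0 < σ2) (hθ : θ ≠ 0) (h G F : ℝ → ℝ)
    (hh : ∀ x, h x = (1 + x / θ) ^ (-θ))
    (hG : ∀ x, G x = 1 / (1 + σ2 * h x / 2))
    (hF : ∀ x, F x = 1 / (1 + σ2 * Real.exp (-x) / 2)) :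
    (∀ x y : ℝ, 0 < 1 + x / θ → 0 < 1 + y / θ → x ≤ y → G x ≤ G y) ∧
      StrictMono F ∧ Continuous F ∧
      Tendsto F atBot (𝓝 0) ∧ Tendsto F atTop (𝓝 1) := by
  have hden : ∀ x : ℝ, 0 < 1 + σ2 * Real.exp (-x) / 2 := by
    intro x
    positivity
  refine ⟨?_, ?_, ?_, ?_, ?_⟩
  · intro x y hx hy hxy
    have hhy : 0 < h y := by rw [hh]; exact Real.rpow_pos_of_pos hy _
    have hxh : h y ≤ h x := by
      rw [hh, hh]
      rcases lt_or_gt_of_ne hθ with hneg | hpos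
      · have : 1 + y / θ ≤ 1 + x / θ := by
          have := div_le_div_of_nonpos_of_le (le_of_lt hneg) hxy
          linarith
        exact Real.rpow_le_rpow (le_of_lt hy) this (by linarith)
      · have hbase : 1 + x / θ ≤ 1 + y / θ := by
          gcongr
        exact Real.rpow_le_rpow_of_nonpos hx hbase (by linarith)
    rw [hG, hG]
    apply one_div_le_one_div_of_le
    · positivity
    · nlinarith
  · intro x y hxy
    rw [hF, hF]
    apply one_div_lt_one_div_of_lt (hden y)
    have := Real.exp_lt_exp.mpr (neg_lt_neg hxy)
    nlinarith
  · have : Continuous (fun x => 1 + σ2 * Real.exp (-x) / 2) := by continuity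
    rw [show F = fun x => 1 / (1 + σ2 * Real.exp (-x) / 2) from funext hF]
    exact continuous_const.div this (fun x => (hden x).ne')
  · rw [show F = fun x => 1 / (1 + σ2 * Real.exp (-x) / 2) from funext hF]
    simp only [one_div]
    apply Filter.Tendsto.comp tendsto_inv_atTop_zero
    apply tendsto_atTop_add_const_left
    apply Tendsto.atTop_div_const (by norm_num)
    apply Tendsto.const_mul_atTop hσ
    exact Real.tendsto_exp_atTop.comp tendsto_neg_atBot_atTop
  · rw [show F = fun x => 1 / (1 + σ2 * Real.exp (-x) / 2) from funext hF]
    have hd : Tendsto (fun x => 1 + σ2 * Real.exp (-x) / 2) atTop (𝓝 1) := by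
      have : Tendsto (fun x : ℝ => Real.exp (-x)) atTop (𝓝 0) := by
        exact Real.tendsto_exp_atBot.comp tendsto_neg_atTop_atBot
      have := ((this.const_mul σ2).div_const 2).const_add 1
      simpa using this
    simpa [one_div] using hd.inv₀ one_ne_zero
end

section
/- For constants a, b, c ≥ 0, the function G(x,y) = exp{ -e^{-x-a-c} - e^{-y-b-c} + e^{-max(x,y)-a-b-c} } on ℝ² is a bivariate cumulative distribution function with Gumbel-type marginals; in particular it is nondecreasing in each variable, its marginal limits are G(x,∞) = exp{-e^{-x-a-c}} and G(∞,y) = exp{-e^{-y-b-c}}, and for all x₁<x₂, y₁<y₂ the rectangle inequality G(x₂,y₂)-G(x₁,y₂)-G(x₂,y₁)+G(x₁,y₁) ≥ 0 holds provided e^{-a-b-c} ≤ min(e^{-a-c}, e^{-b-c}) (which holds automatically since a,b,c ≥ 0... specifically since e^{-b} ≤ 1 and e^{-a} ≤ 1). -/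
/-!
Substituting `p = e^{-x}`, `q = e^{-y}` turns `e^{-max(x,y)}` into `min p q`, so
`G = exp φ` with `φ(p, q) = -α p - β q + γ min(p, q)`, where `α = e^{-a-c}`, `β = e^{-b-c}`,
`γ = e^{-a-b-c}` satisfy `0 ≤ γ ≤ min(α, β)`. Since `min(·, q)` is 1-Lipschitz, `γ ≤ α` makes `φ`
antitone in `p` (and likewise in `q`); since `min` is supermodular, so is `φ`. Composing with the
increasing convex function `exp` preserves both properties, which gives monotonicity and the
rectangle inequality. The marginal limits follow from continuity of `φ` at `q = 0`.
-/

open Filter Topology Real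

theorem min_add_min_le_min_add_min {p p' q q' : ℝ} (hp : p ≤ p') (hq : q ≤ q') :
    min p' q + min p q' ≤ min p q + min p' q' := by
  simp only [min_def]
  split_ifs <;> linarith

theorem Real.exp_add_exp_le_exp_add_exp {s t u v : ℝ} (hst : s ≤ t) (hsu : s ≤ u)
    (htu : t + u ≤ s + v) : exp t + exp u ≤ exp s + exp v := by
  -- `exp s + exp (t + u - s) - exp t - exp u = (exp t - exp s) * (exp u - exp s) / exp s`
  have hexp : exp t * exp u = exp s * exp (t + u - s) := by
    rw [← exp_add, ← exp_add]; ring_nf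
  have hspread : 0 ≤ (exp t - exp s) * (exp u - exp s) :=
    mul_nonneg (sub_nonneg.2 (exp_le_exp.2 hst)) (sub_nonneg.2 (exp_le_exp.2 hsu))
  have hv : exp (t + u - s) ≤ exp v := exp_le_exp.2 (by linarith)
  nlinarith [exp_pos s]

theorem antitone_exp_neg : Antitone fun x : ℝ => exp (-x) :=
  fun _ _ h => exp_le_exp.2 (neg_le_neg h)

/-- The exponent of the limit law, in the variables `p = e^{-x}`, `q = e^{-y}`. -/
def marshallOlkinExponent (α β γ p q : ℝ) : ℝ := -α * p - β * q + γ * min p q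

namespace marshallOlkinExponent

variable {α β γ : ℝ}

theorem comm (p q : ℝ) :
    marshallOlkinExponent α β γ p q = marshallOlkinExponent β α γ q p := by
  simp only [marshallOlkinExponent, min_comm p q]
  ring

theorem antitone_left (hγ : 0 ≤ γ) (hγα : γ ≤ α) (q : ℝ) :
    Antitone fun p => marshallOlkinExponent α β γ p q := by
  intro p₁ p₂ hp
  have hmin : min p₂ q - min p₁ q ≤ p₂ - p₁ := by
    simp only [min_def]; split_ifs <;> linarith
  have : γ * (min p₂ q - min p₁ q) ≤ α * (p₂ - p₁) :=
    (mul_le_mul_of_nonneg_left hmin hγ).trans (mul_le_mul_of_nonneg_right hγα (sub_nonneg.2 hp))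
  simp only [marshallOlkinExponent]
  linarith

theorem antitone_right (hγ : 0 ≤ γ) (hγβ : γ ≤ β) (p : ℝ) :
    Antitone fun q => marshallOlkinExponent α β γ p q := by
  simpa only [comm p] using antitone_left (β := α) hγ hγβ p

theorem supermodular (hγ : 0 ≤ γ) {p p' q q' : ℝ} (hp : p ≤ p') (hq : q ≤ q') :
    marshallOlkinExponent α β γ p' q + marshallOlkinExponent α β γ p q' ≤
      marshallOlkinExponent α β γ p q + marshallOlkinExponent α β γ p' q' := by
  have := mul_le_mul_of_nonneg_left (min_add_min_le_min_add_min hp hq) hγ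
  simp only [marshallOlkinExponent]
  linarith

theorem exp_add_exp_le_exp_add_exp (hγ : 0 ≤ γ) (hγα : γ ≤ α) (hγβ : γ ≤ β) {p p' q q' : ℝ}
    (hp : p ≤ p') (hq : q ≤ q') :
    exp (marshallOlkinExponent α β γ p' q) + exp (marshallOlkinExponent α β γ p q') ≤
      exp (marshallOlkinExponent α β γ p' q') + exp (marshallOlkinExponent α β γ p q) :=
  Real.exp_add_exp_le_exp_add_exp (antitone_right hγ hγβ p' hq) (antitone_left hγ hγα q' hp)
    ((supermodular hγ hp hq).trans_eq (add_comm _ _))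

theorem tendsto_exp_atTop (α β γ : ℝ) {p : ℝ} (hp : 0 ≤ p) :
    Tendsto (fun y => exp (marshallOlkinExponent α β γ p (exp (-y)))) atTop
      (𝓝 (exp (-(α * p)))) := by
  have hcont : Continuous fun q => exp (marshallOlkinExponent α β γ p q) := by
    unfold marshallOlkinExponent; fun_prop
  have hzero : marshallOlkinExponent α β γ p 0 = -(α * p) := by
    simp [marshallOlkinExponent, min_eq_right hp]
  simpa only [Function.comp_def, hzero] using
    (hcont.tendsto 0).comp tendsto_exp_neg_atTop_nhds_zero

end marshallOlkinExponent

open marshallOlkinExponent in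
theorem stmt_16_general (a b c : ℝ) (ha : 0 ≤ a) (hb : 0 ≤ b) (G : ℝ → ℝ → ℝ)
    (hG : ∀ x y, G x y = Real.exp
      (-Real.exp (-x - a - c) - Real.exp (-y - b - c) + Real.exp (-max x y - a - b - c))) :
    (∀ y, Monotone (fun x => G x y)) ∧ (∀ x, Monotone (fun y => G x y)) ∧
      (∀ x, Tendsto (fun y => G x y) atTop (𝓝 (Real.exp (-Real.exp (-x - a - c))))) ∧
      (∀ y, Tendsto (fun x => G x y) atTop (𝓝 (Real.exp (-Real.exp (-y - b - c))))) ∧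
      (∀ x₁ x₂ y₁ y₂ : ℝ, x₁ < x₂ → y₁ < y₂ →
        0 ≤ G x₂ y₂ - G x₁ y₂ - G x₂ y₁ + G x₁ y₁) := by
  set α := exp (-a - c)
  set β := exp (-b - c)
  set γ := exp (-a - b - c)
  have hγ : 0 ≤ γ := (exp_pos _).le
  have hγα : γ ≤ α := exp_le_exp.2 (by linarith)
  have hγβ : γ ≤ β := exp_le_exp.2 (by linarith)
  have hα (x : ℝ) : exp (-x - a - c) = α * exp (-x) := by rw [← exp_add]; congr 1; ring
  have hβ (y : ℝ) : exp (-y - b - c) = β * exp (-y) := by rw [← exp_add]; congr 1; ring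
  have hγ' (z : ℝ) : exp (-z - a - b - c) = γ * exp (-z) := by rw [← exp_add]; congr 1; ring
  have hφ (x y : ℝ) : G x y = exp (marshallOlkinExponent α β γ (exp (-x)) (exp (-y))) := by
    rw [hG, hα, hβ, hγ', antitone_exp_neg.map_max, marshallOlkinExponent, neg_mul]
  simp only [hφ, hα, hβ]
  refine ⟨fun y => exp_monotone.comp ((antitone_left hγ hγα _).comp antitone_exp_neg),
    fun x => exp_monotone.comp ((antitone_right hγ hγβ _).comp antitone_exp_neg),
    fun x => tendsto_exp_atTop α β γ (exp_pos _).le,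
    fun y => by
      simpa only [marshallOlkinExponent.comm] using tendsto_exp_atTop β α γ (exp_pos (-y)).le,
    fun x₁ x₂ y₁ y₂ hx hy => ?_⟩
  have hp : exp (-x₂) ≤ exp (-x₁) := antitone_exp_neg hx.le
  have hq : exp (-y₂) ≤ exp (-y₁) := antitone_exp_neg hy.le
  linarith [exp_add_exp_le_exp_add_exp hγ hγα hγβ hp hq]

/-- For a,b,c ≥ 0, the function
G(x,y) = exp(-e^{-x-a-c} - e^{-y-b-c} + e^{-max(x,y)-a-b-c}) is a bivariate c.d.f.
with Gumbel-type marginals: nondecreasing in each variable, with marginal limits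
G(x,∞) = exp(-e^{-x-a-c}) and G(∞,y) = exp(-e^{-y-b-c}), and satisfying the
rectangle (2-increasing) inequality. -/
theorem stmt_16 (a b c : ℝ) (ha : 0 ≤ a) (hb : 0 ≤ b) (hc : 0 ≤ c) (G : ℝ → ℝ → ℝ)
    (hG : ∀ x y, G x y = Real.exp
      (-Real.exp (-x - a - c) - Real.exp (-y - b - c) + Real.exp (-max x y - a - b - c))) :
    (∀ y, Monotone (fun x => G x y)) ∧ (∀ x, Monotone (fun y => G x y)) ∧
      (∀ x, Tendsto (fun y => G x y) atTop (𝓝 (Real.exp (-Real.exp (-x - a - c))))) ∧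
      (∀ y, Tendsto (fun x => G x y) atTop (𝓝 (Real.exp (-Real.exp (-y - b - c))))) ∧
      (∀ x₁ x₂ y₁ y₂ : ℝ, x₁ < x₂ → y₁ < y₂ →
        0 ≤ G x₂ y₂ - G x₁ y₂ - G x₂ y₁ + G x₁ y₁) :=
  stmt_16_general a b c ha hb G hG
end
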